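/- For the GUE with n = 2k+1 odd, the j-th cumulant of log|det X_n| satisfies Γ_j(n,2) = (−1)^j·(j−1)!·∑_{m=0}^{k} 1/(2m+1)^{j−1} + (−1)^j·(j−1)!·(2k+1)·∑_{m=k+1}^{∞} 1/(2m+1)^{j} for every integer j ≥ 2. -/

import Mathlib

/-- The moment generating function of the log-determinant of an `n × n` GUE matrix:
`M_{n,2}(s) = 2^{ns/2} · ∏_{m=1}^{n} Γ(s/2 + 1/2 + ⌊m/2⌋)/Γ(1/2 + ⌊m/2⌋)`. -/
noncomputable def gueMgf (n : ℕ) (s : ℝ) : ℝ :=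
  (2 : ℝ) ^ ((n : ℝ) * s / 2) *
    ∏ m ∈ Finset.Icc 1 n,
      Real.Gamma (s / 2 + 1/2 + (m / 2 : ℕ)) / Real.Gamma (1/2 + (m / 2 : ℕ))

/-- The `j`-th cumulant of the log-determinant of an `n × n` GUE matrix. -/
noncomputable def gueCumulant (j n : ℕ) : ℝ :=
  iteratedDeriv j (fun s => Real.log (gueMgf n s)) 0

open Real Filter Finset Topology Set

/-!
For `s > -1` the logarithm of `M_{n,2}` is `(n s / 2) log 2 + ∑_m log Γ(s/2 + 1/2 + ⌊m/2⌋)` up to a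
constant, so for `j ≥ 2` the cumulant is `2^{-j} ∑_{m=1}^{n} ψ^{(j-1)}(1/2 + ⌊m/2⌋)`.
Differentiating the Weierstrass product of `Γ` termwise gives `ψ^{(j-1)}(x) = (-1)^j (j-1)! ∑_{i ≥ 0} (x + i)^{-j}`,
and at `x = 1/2 + l` the factor `2^{-j}` turns this sum into `∑_{i ≥ l} (2i + 1)^{-j}`. For
`n = 2k + 1` the index `⌊m/2⌋` takes the value `0` once and each of `1, …, k` twice, so the term
`(2i + 1)^{-j}` is counted `min(2i + 1, 2k + 1)` times.
-/

section DerivativeSequence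

variable {𝕜 E : Type*} [NontriviallyNormedField 𝕜] [NormedAddCommGroup E] [NormedSpace 𝕜 E]

theorem iteratedDeriv_succ_eq_of_hasDerivAt {f : 𝕜 → E} {F : ℕ → 𝕜 → E} {U : Set 𝕜}
    (hU : IsOpen U) (hf : ∀ x ∈ U, HasDerivAt f (F 0 x) x)
    (hF : ∀ i, ∀ x ∈ U, HasDerivAt (F i) (F (i + 1) x) x) (i : ℕ) {x : 𝕜} (hx : x ∈ U) :
    iteratedDeriv (i + 1) f x = F i x := by
  induction i generalizing x with
  | zero => rw [iteratedDeriv_one, (hf x hx).deriv]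
  | succ i ih =>
    have h : iteratedDeriv (i + 1) f =ᶠ[𝓝 x] F i :=
      eventually_of_mem (hU.mem_nhds hx) fun y hy => ih hy
    rw [iteratedDeriv_succ, h.deriv_eq, (hF i x hx).deriv]

end DerivativeSequence

theorem summable_one_div_add_pow {x : ℝ} (hx : 0 < x) {p : ℕ} (hp : 1 < p) :
    Summable fun k : ℕ => 1 / (x + k) ^ p := by
  refine ((summable_one_div_nat_add_rpow x p).2 (by exact_mod_cast hp)).congr fun k => ?_
  rw [abs_of_pos (by positivity), rpow_natCast, add_comm]

theorem hasDerivAt_one_div_add_pow {x c : ℝ} (h : x + c ≠ 0) (q : ℕ) :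
    HasDerivAt (fun y => 1 / (y + c) ^ (q + 1)) (-((q : ℝ) + 1) / (x + c) ^ (q + 2)) x := by
  have := (((hasDerivAt_id' x).add_const c).fun_pow (q + 1)).fun_inv (pow_ne_zero _ h)
  simp only [one_div, Nat.add_sub_cancel] at this ⊢
  refine this.congr_deriv ?_
  push_cast
  field_simp
  ring

theorem hasDerivAt_tsum_one_div_add_pow {x : ℝ} (hx : 0 < x) {q : ℕ} (hq : 0 < q) :
    HasDerivAt (fun y : ℝ => ∑' k : ℕ, 1 / (y + k) ^ (q + 1))
      (∑' k : ℕ, -((q : ℝ) + 1) / (x + k) ^ (q + 2)) x := by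
  refine hasDerivAt_tsum_of_isPreconnected
    ((summable_one_div_add_pow (half_pos hx) (by omega : 1 < q + 2)).mul_left ((q : ℝ) + 1))
    isOpen_Ioi isPreconnected_Ioi
    (fun k y (hy : x / 2 < y) => hasDerivAt_one_div_add_pow
      (add_pos_of_pos_of_nonneg ((half_pos hx).trans hy) k.cast_nonneg).ne' q)
    (fun k y hy => ?_) (half_lt_self hx) (summable_one_div_add_pow hx (by omega))
    (half_lt_self hx)
  have hy : x / 2 < y := hy
  rw [norm_div, norm_neg, norm_pow, Real.norm_of_nonneg (by positivity),
    Real.norm_of_nonneg (by linarith [(k.cast_nonneg : (0 : ℝ) ≤ k)]), mul_one_div]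
  gcongr

theorem sum_range_sub_log_one_add_div {x : ℝ} (hx : 0 < x) (n : ℕ) :
    ∑ k ∈ range n, (x / (k + 1) - log (1 + x / (k + 1)))
      = BohrMollerup.logGammaSeq x n + x * (harmonic n - log n) + log x := by
  have hlog (k : ℕ) : log (1 + x / (k + 1)) = log (x + (k + 1)) - log (k + 1) := by
    rw [← log_div (by positivity) (by positivity)]
    congr 1
    field_simp
    ring
  have hfac : ∑ k ∈ range n, log ((k : ℝ) + 1) = log n.factorial := by
    rw [← log_prod (fun k _ => by positivity), ← prod_range_add_one_eq_factorial]
    push_cast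
    rfl
  have hharm : x * harmonic n = ∑ k ∈ range n, x / (k + 1) := by
    simp [harmonic, mul_sum, div_eq_mul_inv]
  rw [BohrMollerup.logGammaSeq, sum_range_succ', sum_sub_distrib, ← hharm]
  push_cast [hlog, sum_sub_distrib, hfac, add_zero]
  ring

theorem hasSum_sub_log_one_add_div {x : ℝ} (hx : 0 < x) :
    HasSum (fun k : ℕ => x / (k + 1) - log (1 + x / (k + 1)))
      (log (Gamma x) + x * eulerMascheroniConstant + log x) := by
  refine (hasSum_iff_tendsto_nat_of_nonneg (fun k => ?_) _).2 ?_
  · linarith [log_le_sub_one_of_pos (by positivity : 0 < 1 + x / (k + 1))]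
  · simp_rw [sum_range_sub_log_one_add_div hx]
    exact ((BohrMollerup.tendsto_log_gamma hx).add
      (tendsto_harmonic_sub_log.const_mul x)).add_const _

theorem hasDerivAt_tsum_sub_log_one_add_div {x : ℝ} (hx : 0 < x) :
    HasDerivAt (fun y : ℝ => ∑' k : ℕ, (y / (k + 1) - log (1 + y / (k + 1))))
      (∑' k : ℕ, (1 / (k + 1) - 1 / (x + k + 1))) x := by
  have hterm (k : ℕ) (y : ℝ) (hy : 0 < y) :
      HasDerivAt (fun y => y / (k + 1) - log (1 + y / (k + 1)))
        (1 / (k + 1) - 1 / (y + k + 1)) y := by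
    have hdiv := (hasDerivAt_id' y).div_const ((k : ℝ) + 1)
    refine (hdiv.sub ((hdiv.const_add 1).log (by positivity))).congr_deriv ?_
    field_simp
    ring
  refine hasDerivAt_tsum_of_isPreconnected
    ((summable_one_div_add_pow one_pos one_lt_two).mul_left (x + 1)) isOpen_Ioo
    isPreconnected_Ioo (fun k y hy => hterm k y hy.1) (fun k y hy => ?_)
    (⟨hx, by linarith⟩ : x ∈ Ioo 0 (x + 1)) (hasSum_sub_log_one_add_div hx).summable
    (⟨hx, by linarith⟩ : x ∈ Ioo 0 (x + 1))
  obtain ⟨hy0, hy1⟩ := hy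
  have hk : (0 : ℝ) ≤ k := k.cast_nonneg
  have hdiff : 1 / ((k : ℝ) + 1) - 1 / (y + k + 1) = y / ((k + 1) * (y + k + 1)) := by
    field_simp
    ring
  rw [hdiff, Real.norm_of_nonneg (by positivity), mul_one_div, add_comm 1 (k : ℝ), sq]
  gcongr
  linarith

/-- `polygamma i` is `ψ^{(i)} = (log Γ)^{(i+1)}`, as the series obtained from the Weierstrass
product; it is meaningful for `x > 0`. -/
noncomputable def polygamma : ℕ → ℝ → ℝ
  | 0, x => -(1 / x) - eulerMascheroniConstant + ∑' k : ℕ, (1 / (k + 1) - 1 / (x + k + 1))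
  | i + 1, x => (-1) ^ i * (i + 1).factorial * ∑' k : ℕ, 1 / (x + k) ^ (i + 2)

theorem hasDerivAt_log_Gamma {x : ℝ} (hx : 0 < x) :
    HasDerivAt (fun y => log (Gamma y)) (polygamma 0 x) x := by
  have hweierstrass : (fun y => ∑' k : ℕ, (y / (k + 1) - log (1 + y / (k + 1)))
      - eulerMascheroniConstant * y - log y) =ᶠ[𝓝 x] fun y => log (Gamma y) :=
    eventually_of_mem (Ioi_mem_nhds hx) fun y hy => by
      dsimp only
      rw [(hasSum_sub_log_one_add_div hy).tsum_eq]
      ring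
  have hderiv := ((hasDerivAt_tsum_sub_log_one_add_div hx).sub
    ((hasDerivAt_id' x).const_mul eulerMascheroniConstant)).sub (hasDerivAt_log hx.ne')
  refine (hderiv.congr_of_eventuallyEq hweierstrass.symm).congr_deriv ?_
  rw [polygamma]
  ring

theorem hasDerivAt_tsum_one_div_sub_one_div_add {x : ℝ} (hx : -(1 / 2) < x) :
    HasDerivAt (fun y : ℝ => ∑' k : ℕ, (1 / (k + 1) - 1 / (y + k + 1)))
      (∑' k : ℕ, 1 / (x + k + 1) ^ 2) x := by
  have hterm (k : ℕ) (y : ℝ) (hy : -(1 / 2) < y) :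
      HasDerivAt (fun y : ℝ => 1 / (k + 1) - 1 / (y + k + 1)) (1 / (y + k + 1) ^ 2) y := by
    have hyk : y + (k + 1) ≠ 0 := by linarith [(k.cast_nonneg : (0 : ℝ) ≤ k)]
    have := (hasDerivAt_one_div_add_pow hyk 0).const_sub (1 / ((k : ℝ) + 1))
    simp only [Nat.cast_zero, zero_add, pow_one, ← add_assoc] at this
    exact this.congr_deriv (by ring)
  have hbound (k : ℕ) (y : ℝ) (hy : -(1 / 2) < y) :
      ‖1 / (y + k + 1) ^ 2‖ ≤ 1 / (1 / 2 + k) ^ 2 := by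
    rw [Real.norm_of_nonneg (by positivity)]
    have hk : (0 : ℝ) ≤ k := k.cast_nonneg
    apply one_div_le_one_div_of_le (by positivity)
    apply pow_le_pow_left₀ (by positivity)
    linarith
  refine hasDerivAt_tsum_of_isPreconnected (summable_one_div_add_pow one_half_pos one_lt_two)
    isOpen_Ioi isPreconnected_Ioi (fun k y hy => hterm k y hy) (fun k y hy => hbound k y hy)
    (by norm_num : (0 : ℝ) ∈ Set.Ioi (-(1 / 2))) ?_ hx
  simp [summable_zero]

theorem hasDerivAt_polygamma (i : ℕ) {x : ℝ} (hx : 0 < x) :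
    HasDerivAt (polygamma i) (polygamma (i + 1) x) x := by
  cases i with
  | zero =>
    have hinv : HasDerivAt (fun y : ℝ => -(1 / y)) (1 / x ^ 2) x := by
      simpa only [one_div, neg_neg] using (hasDerivAt_inv hx.ne').fun_neg
    have hsum := (summable_one_div_add_pow hx one_lt_two).tsum_eq_zero_add
    refine ((hinv.sub_const eulerMascheroniConstant).add
      (hasDerivAt_tsum_one_div_sub_one_div_add (by linarith))).congr_deriv ?_
    simp only [polygamma, zero_add, pow_zero, Nat.factorial_one, Nat.cast_one, one_mul, hsum]
    push_cast
    simp only [add_zero, add_assoc]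
  | succ i =>
    refine ((hasDerivAt_tsum_one_div_add_pow hx i.succ_pos).const_mul
      ((-1) ^ i * ((i + 1).factorial : ℝ))).congr_deriv ?_
    simp only [polygamma, neg_div, tsum_neg, div_eq_mul_one_div (_ + _ : ℝ), tsum_mul_left,
      Nat.factorial_succ (i + 1)]
    push_cast
    ring

theorem gueMgf_arg_pos {s : ℝ} (hs : -1 < s) (l : ℕ) : 0 < s / 2 + 1 / 2 + l := by
  linarith [(l.cast_nonneg : (0 : ℝ) ≤ l)]

theorem log_gueMgf (n : ℕ) {s : ℝ} (hs : -1 < s) :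
    log (gueMgf n s) = n * s / 2 * log 2 + ∑ m ∈ Icc 1 n,
      (log (Gamma (s / 2 + 1 / 2 + (m / 2 : ℕ))) - log (Gamma (1 / 2 + (m / 2 : ℕ)))) := by
  have hnum (m : ℕ) := Gamma_pos_of_pos (gueMgf_arg_pos hs (m / 2))
  have hden (m : ℕ) : 0 < Gamma (1 / 2 + (m / 2 : ℕ)) := Gamma_pos_of_pos (by positivity)
  rw [gueMgf, log_mul (by positivity) (prod_pos fun m _ => div_pos (hnum m) (hden m)).ne',
    log_rpow two_pos, log_prod fun m _ => (div_pos (hnum m) (hden m)).ne']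
  simp only [log_div (hnum _).ne' (hden _).ne']

/-- The `(i+1)`-st derivative of `log ∘ gueMgf n` on `(-1, ∞)`. -/
noncomputable def logGueMgfDeriv (n i : ℕ) (s : ℝ) : ℝ :=
  (if i = 0 then n / 2 * log 2 else 0) +
    ∑ m ∈ Icc 1 n, (1 / 2) ^ (i + 1) * polygamma i (s / 2 + 1 / 2 + (m / 2 : ℕ))

theorem hasDerivAt_gueMgf_arg (s c : ℝ) :
    HasDerivAt (fun t : ℝ => t / 2 + 1 / 2 + c) (1 / 2) s := by
  simpa using (((hasDerivAt_id' s).div_const 2).add_const (1 / 2 : ℝ)).add_const c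

theorem hasDerivAt_log_gueMgf (n : ℕ) {s : ℝ} (hs : -1 < s) :
    HasDerivAt (fun t => log (gueMgf n t)) (logGueMgfDeriv n 0 s) s := by
  have hlin : HasDerivAt (fun t : ℝ => n * t / 2 * log 2) (n / 2 * log 2) s := by
    simpa using (((hasDerivAt_id' s).const_mul (n : ℝ)).div_const 2).mul_const (log 2)
  have hsum := hlin.add (HasDerivAt.fun_sum (u := Icc 1 n) fun m _ =>
    ((hasDerivAt_log_Gamma (gueMgf_arg_pos hs (m / 2))).comp s
      (hasDerivAt_gueMgf_arg s _)).sub_const (log (Gamma (1 / 2 + (m / 2 : ℕ)))))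
  refine (hsum.congr_of_eventuallyEq (eventually_of_mem (Ioi_mem_nhds hs) fun t ht =>
    log_gueMgf n ht)).congr_deriv ?_
  simp only [logGueMgfDeriv, ↓reduceIte, zero_add, pow_one, mul_comm]

theorem hasDerivAt_logGueMgfDeriv (n i : ℕ) {s : ℝ} (hs : -1 < s) :
    HasDerivAt (logGueMgfDeriv n i) (logGueMgfDeriv n (i + 1) s) s := by
  have hsum := HasDerivAt.fun_sum (u := Icc 1 n) fun m _ =>
    ((hasDerivAt_polygamma i (gueMgf_arg_pos hs (m / 2))).comp s
      (hasDerivAt_gueMgf_arg s _)).const_mul ((1 / 2 : ℝ) ^ (i + 1))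
  refine ((hasDerivAt_const s _).add hsum).congr_deriv ?_
  simp only [logGueMgfDeriv, Nat.add_one_ne_zero, ↓reduceIte, zero_add]
  exact sum_congr rfl fun m _ => by ring

theorem gueCumulant_eq_sum_tsum (n : ℕ) {j : ℕ} (hj : 2 ≤ j) :
    gueCumulant j n = (-1) ^ j * (j - 1).factorial *
      ∑ m ∈ Icc 1 n, ∑' k : ℕ, 1 / (2 * ((m / 2 + k : ℕ) : ℝ) + 1) ^ j := by
  obtain ⟨i, rfl⟩ : ∃ i, j = i + 2 := ⟨j - 2, by omega⟩
  have hhalf (l : ℕ) : (1 / 2 : ℝ) ^ (i + 2) * ∑' k : ℕ, 1 / ((0 : ℝ) / 2 + 1 / 2 + l + k) ^ (i + 2)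
      = ∑' k : ℕ, 1 / (2 * ((l + k : ℕ) : ℝ) + 1) ^ (i + 2) := by
    rw [← tsum_mul_left]
    refine tsum_congr fun k => ?_
    rw [div_pow, one_pow, div_mul_div_comm, one_mul, ← mul_pow]
    push_cast
    ring_nf
  rw [gueCumulant, iteratedDeriv_succ_eq_of_hasDerivAt isOpen_Ioi
    (fun s hs => hasDerivAt_log_gueMgf n hs) (fun i s hs => hasDerivAt_logGueMgfDeriv n i hs)
    (i + 1) (by norm_num : (0 : ℝ) ∈ Set.Ioi (-1))]
  simp only [logGueMgfDeriv, polygamma, Nat.add_one_ne_zero, ↓reduceIte, zero_add, mul_sum,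
    ← hhalf]
  refine sum_congr rfl fun m _ => ?_
  rw [show i + 2 - 1 = i + 1 by omega]
  ring

theorem sum_Icc_tsum_nat_add_div_two {b : ℕ → ℝ} (hb : Summable b) (k : ℕ) :
    ∑ m ∈ Icc 1 (2 * k + 1), ∑' i : ℕ, b (m / 2 + i)
      = ∑ m ∈ range (k + 1), (2 * (m : ℝ) + 1) * b m
        + (2 * k + 1) * ∑' i : ℕ, b (i + (k + 1)) := by
  have htail (l : ℕ) : ∑' i : ℕ, b (i + l) = b l + ∑' i : ℕ, b (i + (l + 1)) := by
    rw [((summable_nat_add_iff l).2 hb).tsum_eq_zero_add]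
    simp only [zero_add, add_assoc, add_comm 1]
  induction k with
  | zero =>
    simpa using htail 0
  | succ k ih =>
    rw [show 2 * (k + 1) + 1 = 2 * k + 1 + 1 + 1 by ring, sum_Icc_succ_top (by omega),
      sum_Icc_succ_top (by omega), ih, sum_range_succ _ (k + 1),
      show (2 * k + 1 + 1) / 2 = k + 1 by omega, show (2 * k + 1 + 1 + 1) / 2 = k + 1 by omega]
    simp only [add_comm (k + 1), htail (k + 1)]
    push_cast
    ring

theorem gueCumulant_odd_formula (k : ℕ) (j : ℕ) (hj : 2 ≤ j) :
    gueCumulant j (2 * k + 1)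
      = (-1) ^ j * (Nat.factorial (j - 1) : ℝ) *
          (∑ m ∈ Finset.range (k + 1), 1 / (2 * (m : ℝ) + 1) ^ (j - 1))
        + (-1) ^ j * (Nat.factorial (j - 1) : ℝ) * (2 * (k : ℝ) + 1) *
          ∑' m : ℕ, 1 / (2 * ((m : ℝ) + k + 1) + 1) ^ j := by
  have hodd : Summable fun i : ℕ => 1 / (2 * (i : ℝ) + 1) ^ j := by
    refine ((summable_one_div_add_pow one_half_pos hj).mul_left ((1 / 2) ^ j)).congr fun i => ?_
    rw [div_pow, one_pow, div_mul_div_comm, one_mul, ← mul_pow]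
    ring_nf
  have hhead (m : ℕ) : (2 * (m : ℝ) + 1) * (1 / (2 * m + 1) ^ j) = 1 / (2 * m + 1) ^ (j - 1) := by
    obtain ⟨i, rfl⟩ : ∃ i, j = i + 1 := ⟨j - 1, by omega⟩
    rw [Nat.add_sub_cancel, pow_succ]
    field_simp
  have htail : ∑' i : ℕ, 1 / (2 * ((i + (k + 1) : ℕ) : ℝ) + 1) ^ j
      = ∑' m : ℕ, 1 / (2 * ((m : ℝ) + k + 1) + 1) ^ j := by
    refine tsum_congr fun i => ?_
    push_cast
    ring_nf
  rw [gueCumulant_eq_sum_tsum _ hj, sum_Icc_tsum_nat_add_div_two hodd k]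
  simp only [hhead, htail]
  ring
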